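/- arXiv:1202.1004 — 3 statements merged into one kernel-verified Lean document; each statement's English description precedes it below -/
import Mathlib

section
/- For any functor f : X ⥤ Y between small categories, any presheaf A : Xᵒᵖ ⥤ Type and any set V, the right Kan extension along f of the copresheaf x ↦ (A(x) → V) (i.e. of A ⧀ const V) is naturally isomorphic to the copresheaf y ↦ ((Lan_{fᵒᵖ} A)(y) → V), i.e. to (Lan_{fᵒᵖ} A) ⧀ const V, where Lan_{fᵒᵖ} A is the left Kan extension of A along fᵒᵖ. -/
open CategoryTheory Opposite

universe u

/-- The pointwise complement `A ⧀ M` of a presheaf `A` in a copresheaf `M`. -/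
@[simps]
def cmpl {X : Type u} [Category.{u} X] (A : Xᵒᵖ ⥤ Type u) (M : X ⥤ Type u) :
    X ⥤ Type u where
  obj x := A.obj (op x) → M.obj x
  map {x y} f := TypeCat.ofHom fun φ => fun a => M.map f (φ (A.map f.op a))
  map_id := by intro x; ext; simp
  map_comp := by intros; ext; simp

/-- The contravariant complement of a copresheaf `G` in a set `V`. -/
@[simps]
def ccmpl {Y : Type u} [Category.{u} Y] (G : Y ⥤ Type u) (V : Type u) :
    Yᵒᵖ ⥤ Type u where
  obj y := G.obj y.unop → V
  map {y y'} g := TypeCat.ofHom fun ψ => fun s => ψ (G.map g.unop s)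
  map_id := by intro y; ext ψ s; simp
  map_comp := by intros; ext ψ s; simp

section Aux

variable {X Y : Type u} [Category.{u} X] [Category.{u} Y]
  (f : X ⥤ Y) (A : Xᵒᵖ ⥤ Type u) (V : Type u)

/-- The candidate counit for `cmpl (Lan A) (const V)` as a right Kan extension. -/
@[simps]
noncomputable def epsDef : f ⋙ cmpl (f.op.lan.obj A) ((Functor.const Y).obj V) ⟶
    cmpl A ((Functor.const X).obj V) where
  app x := TypeCat.ofHom fun φ a => φ ((f.op.lanUnit.app A).app (op x) a)
  naturality := by
    intro x x' g
    ext φ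
    funext a
    have := types_congr_hom ((f.op.lanUnit.app A).naturality g.op) a
    dsimp at this ⊢
    exact congrArg (fun b => φ b) this.symm

variable {f A V}

/-- `β : f ⋙ G ⟶ A ⧀ const V` transposed to `A ⟶ f.op ⋙ ccmpl G V`. -/
@[simps]
def tauDef {G : Y ⥤ Type u} (β : f ⋙ G ⟶ cmpl A ((Functor.const X).obj V)) :
    A ⟶ f.op ⋙ ccmpl G V where
  app x := TypeCat.ofHom fun a s => β.app x.unop s a
  naturality := by
    intro x x' g
    ext a
    funext s
    exact (congr_fun (types_congr_hom (β.naturality g.unop) s) a).symm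

/-- The lift of `β` through the candidate counit. -/
@[simps]
noncomputable def gammaDef {G : Y ⥤ Type u}
    (β : f ⋙ G ⟶ cmpl A ((Functor.const X).obj V)) :
    G ⟶ cmpl (f.op.lan.obj A) ((Functor.const Y).obj V) where
  app y := TypeCat.ofHom fun t p => ((f.op.lan.obj A).descOfIsLeftKanExtension (f.op.lanUnit.app A)
      (ccmpl G V) (tauDef β)).app (op y) p t
  naturality := by
    intro y y' g
    ext t
    funext p
    have := types_congr_hom (((f.op.lan.obj A).descOfIsLeftKanExtension (f.op.lanUnit.app A)
      (ccmpl G V) (tauDef β)).naturality g.op) p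
    dsimp at this ⊢
    exact (congrArg (fun h => h t) this).symm

lemma gammaDef_fac {G : Y ⥤ Type u} (β : f ⋙ G ⟶ cmpl A ((Functor.const X).obj V)) :
    Functor.whiskerLeft f (gammaDef β) ≫ epsDef f A V = β := by
  apply NatTrans.ext
  funext x
  ext t
  funext a
  have := types_congr_hom ((f.op.lan.obj A).descOfIsLeftKanExtension_fac_app (f.op.lanUnit.app A)
    (ccmpl G V) (tauDef β) (op x)) a
  dsimp at this ⊢
  exact congrArg (fun h => h t) this

lemma gammaDef_uniq {G : Y ⥤ Type u} (β : f ⋙ G ⟶ cmpl A ((Functor.const X).obj V))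
    (γ' : G ⟶ cmpl (f.op.lan.obj A) ((Functor.const Y).obj V))
    (hγ' : Functor.whiskerLeft f γ' ≫ epsDef f A V = β) : γ' = gammaDef β := by
  set σ' : f.op.lan.obj A ⟶ ccmpl G V :=
    { app := fun y => TypeCat.ofHom fun p t => γ'.app y.unop t p
      naturality := by
        intro y y' g
        ext p
        funext t
        have := types_congr_hom (γ'.naturality g.unop) t
        dsimp at this ⊢
        exact (congrArg (fun h => h p) this).symm } with hσ'
  have hfac : f.op.lanUnit.app A ≫ Functor.whiskerLeft f.op σ' = tauDef β := by
    apply NatTrans.ext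
    funext x
    ext a
    funext t
    have := congr_fun (types_congr_hom (NatTrans.congr_app hγ' x.unop) t) a
    dsimp [σ'] at this ⊢
    exact this
  have huniq : σ' = (f.op.lan.obj A).descOfIsLeftKanExtension (f.op.lanUnit.app A)
      (ccmpl G V) (tauDef β) :=
    (f.op.lan.obj A).hom_ext_of_isLeftKanExtension (f.op.lanUnit.app A) _ _
      (by rw [hfac, Functor.descOfIsLeftKanExtension_fac])
  apply NatTrans.ext
  funext y
  ext t
  funext p
  have := types_congr_hom (NatTrans.congr_app huniq (op y)) p
  dsimp [σ'] at this
  exact congr_fun this t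

end Aux

/-- for `f : X ⥤ Y`, a presheaf `A` on `X` and a set `V`, the right Kan
extension along `f` of `A ⧀ const V` is naturally isomorphic to `(Lan_{fᵒᵖ} A) ⧀ const V`. -/
theorem ran_cmpl_const_iso (X Y : Type u) [Category.{u} X] [Category.{u} Y]
    (f : X ⥤ Y) (A : Xᵒᵖ ⥤ Type u) (V : Type u) :
    Nonempty ((f.ran.obj (cmpl A ((Functor.const X).obj V))) ≅
      cmpl (f.op.lan.obj A) ((Functor.const Y).obj V)) := by
  have key : (cmpl (f.op.lan.obj A) ((Functor.const Y).obj V)).IsRightKanExtension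
      (epsDef f A V) := by
    constructor
    constructor
    apply Limits.IsTerminal.ofUniqueHom
      (fun s => CostructuredArrow.homMk (gammaDef s.hom) (by exact gammaDef_fac s.hom))
    intro s m
    apply CostructuredArrow.hom_ext
    have hw := CostructuredArrow.w m
    exact gammaDef_uniq s.hom m.left (by exact hw)
  exact ⟨Functor.rightKanExtensionUnique _
    (f.ranCounit.app (cmpl A ((Functor.const X).obj V))) _ (epsDef f A V)⟩
end

section
/- A functor f : X ⥤ Y between small categories is fully faithful if and only if for every H : Xᵒᵖ × X ⥤ Type the canonical map Nat(hom_Y, Ran_{fᵒᵖ × f} H) → Nat(hom_X, H) is a bijection, naturally in H; here the map sends a natural transformation hom_Y → Ran_{fᵒᵖ × f} H to the composite of the canonical transformation hom_X → hom_Y ∘ (fᵒᵖ × f) (action of f on morphisms), its whiskering along fᵒᵖ × f, and the counit (Ran_{fᵒᵖ × f} H) ∘ (fᵒᵖ × f) → H. (Equivalently: the end of H over X agrees with the end of Ran_{fᵒᵖ × f} H over Y, naturally in H, exactly when f is fully faithful.) -/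
open CategoryTheory Opposite

universe u

/-- The canonical natural transformation `hom_X ⟶ (fᵒᵖ × f) ⋙ hom_Y` given by the
action of `f` on morphisms. -/
@[simps]
def homMap {X Y : Type u} [Category.{u} X] [Category.{u} Y] (f : X ⥤ Y) :
    Functor.hom X ⟶ (f.op.prod f) ⋙ Functor.hom Y where
  app p := TypeCat.ofHom fun φ => f.map φ
  naturality := by
    intro p q g
    ext φ
    exact (f.map_comp _ _).trans (congrArg _ (f.map_comp _ _))

/-- The canonical map `Nat(hom_Y, Ran_{fᵒᵖ × f} H) → Nat(hom_X, H)`: compose the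
action of `f` on homs with the whiskering of `η` along `fᵒᵖ × f` and the counit
of the adjunction `(− ∘ (fᵒᵖ × f)) ⊣ Ran_{fᵒᵖ × f}`. -/
noncomputable def endComparison {X Y : Type u} [Category.{u} X] [Category.{u} Y]
    (f : X ⥤ Y) (H : Xᵒᵖ × X ⥤ Type u)
    (η : Functor.hom Y ⟶ (f.op.prod f).ran.obj H) : Functor.hom X ⟶ H :=
  homMap f ≫ Functor.whiskerLeft (f.op.prod f) η ≫
    ((f.op.prod f).ranAdjunction (Type u)).counit.app H

lemma endComparison_eq {X Y : Type u} [Category.{u} X] [Category.{u} Y]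
    (f : X ⥤ Y) (H : Xᵒᵖ × X ⥤ Type u)
    (η : Functor.hom Y ⟶ (f.op.prod f).ran.obj H) :
    endComparison f H η =
      homMap f ≫ ((((f.op.prod f).ranAdjunction (Type u)).homEquiv
        (Functor.hom Y) H).symm η) := by
  rw [Adjunction.homEquiv_counit]
  rfl

/-- `f : X ⥤ Y` is fully faithful iff for every `H : Xᵒᵖ × X ⥤ Type`
the canonical map `Nat(hom_Y, Ran_{fᵒᵖ × f} H) → Nat(hom_X, H)` is a bijection,
i.e. the end of `H` over `X` agrees with the end of `Ran_{fᵒᵖ × f} H` over `Y`. -/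
theorem fullyFaithful_iff_end_invariance (X Y : Type u) [Category.{u} X] [Category.{u} Y]
    (f : X ⥤ Y) :
    (f.Full ∧ f.Faithful) ↔
      ∀ H : Xᵒᵖ × X ⥤ Type u, Function.Bijective (endComparison f H) := by
  have hc : ∀ H : Xᵒᵖ × X ⥤ Type u,
      Function.Bijective (endComparison f H) ↔
      Function.Bijective (fun g : (f.op.prod f) ⋙ Functor.hom Y ⟶ H => homMap f ≫ g) := by
    intro H
    have h1 : (fun g : (f.op.prod f) ⋙ Functor.hom Y ⟶ H => homMap f ≫ g)
        = endComparison f H ∘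
          (((f.op.prod f).ranAdjunction (Type u)).homEquiv (Functor.hom Y) H) := by
      funext g
      simp [endComparison_eq]
    have h2 : endComparison f H
        = (fun g : (f.op.prod f) ⋙ Functor.hom Y ⟶ H => homMap f ≫ g) ∘
          (((f.op.prod f).ranAdjunction (Type u)).homEquiv (Functor.hom Y) H).symm := by
      funext η
      simp [endComparison_eq]
    constructor
    · intro hb
      rw [h1]
      exact hb.comp (Equiv.bijective _)
    · intro hb
      rw [h2]
      exact hb.comp (Equiv.bijective _)
  constructor
  · rintro ⟨hfull, hfaith⟩ H
    haveI := hfull; haveI := hfaith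
    haveI : IsIso (homMap f) := by
      haveI : ∀ p : Xᵒᵖ × X, IsIso ((homMap f).app p) := by
        intro p
        rw [CategoryTheory.isIso_iff_bijective]
        exact ⟨fun x y hxy => f.map_injective hxy, fun y => f.map_surjective y⟩
      exact NatIso.isIso_of_isIso_app _
    rw [hc H]
    exact ((asIso (homMap f)).homFromEquiv (Z := H)).symm.bijective
  · intro h
    have key : IsIso (homMap f) := by
      obtain ⟨β, hβ⟩ := ((hc (Functor.hom X)).1 (h _)).2 (𝟙 (Functor.hom X))
      have hβ' : homMap f ≫ β = 𝟙 (Functor.hom X) := hβ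
      refine ⟨β, hβ', ?_⟩
      apply ((hc ((f.op.prod f) ⋙ Functor.hom Y)).1 (h _)).1
      show homMap f ≫ β ≫ homMap f = homMap f ≫ 𝟙 _
      rw [← Category.assoc, hβ']
      simp
    have hbij : ∀ a b : X, Function.Bijective (f.map : (a ⟶ b) → _) := by
      intro a b
      haveI : IsIso ((homMap f).app (op a, b)) := inferInstance
      have hb := (CategoryTheory.isIso_iff_bijective _).1 this
      exact hb
    exact ⟨⟨fun {a b} => (hbij a b).2⟩, ⟨fun {a b} => @(hbij a b).1⟩⟩
end

section
/- (Diagonal Yoneda.) For any small category X and any H : Xᵒᵖ × X ⥤ Type, the set of sections of the diagonal extension i_X H (functors s : X ⥤ i_X H over X whose composite with the projection i_X H ⥤ X is the identity of X) is in bijection with the set of natural transformations hom_X → H; both compute the end of H. -/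
open CategoryTheory Opposite

universe u

section
variable {X : Type u} [Category.{u} X] (H : Xᵒᵖ × X ⥤ Type u)

lemma mapSnd_comp {x : Xᵒᵖ} {y y' y'' : X} (v : y ⟶ y') (w : y' ⟶ y'')
    (z : H.obj (x, y)) :
    H.map ((𝟙 x, v ≫ w) : (x, y) ⟶ (x, y'')) z =
      H.map ((𝟙 x, w) : (x, y') ⟶ (x, y'')) (H.map ((𝟙 x, v) : (x, y) ⟶ (x, y')) z) := by
  rw [← FunctorToTypes.map_comp_apply, prod_comp, Category.comp_id]

lemma mapFst_comp {x x' x'' : Xᵒᵖ} {y : X} (u : x ⟶ x') (u' : x' ⟶ x'')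
    (z : H.obj (x, y)) :
    H.map ((u ≫ u', 𝟙 y) : (x, y) ⟶ (x'', y)) z =
      H.map ((u', 𝟙 y) : (x', y) ⟶ (x'', y)) (H.map ((u, 𝟙 y) : (x, y) ⟶ (x', y)) z) := by
  rw [← FunctorToTypes.map_comp_apply, prod_comp, Category.comp_id]

lemma map_exch {x x' : Xᵒᵖ} {y y' : X} (u : x ⟶ x') (v : y ⟶ y') (z : H.obj (x, y)) :
    H.map ((𝟙 x', v) : (x', y) ⟶ (x', y')) (H.map ((u, 𝟙 y) : (x, y) ⟶ (x', y)) z) =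
      H.map ((u, 𝟙 y') : (x, y') ⟶ (x', y')) (H.map ((𝟙 x, v) : (x, y) ⟶ (x, y')) z) := by
  rw [← FunctorToTypes.map_comp_apply, ← FunctorToTypes.map_comp_apply]
  simp

end

/-- The total category of the diagonal extension `i_X H` of `H : Xᵒᵖ × X ⥤ Type`:
objects over `x` are elements of `H(x,x)`; there is (at most one) morphism over
`λ : x → y` from `a` to `b` exactly when `H(id_x, λ)(a) = H(λ, id_y)(b)`. -/
structure DiagEl {X : Type u} [Category.{u} X] (H : Xᵒᵖ × X ⥤ Type u) : Type u where
  pt : X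
  el : H.obj (op pt, pt)

instance {X : Type u} [Category.{u} X] (H : Xᵒᵖ × X ⥤ Type u) :
    Category.{u} (DiagEl H) where
  Hom s t := {l : s.pt ⟶ t.pt //
    H.map ((𝟙 (op s.pt), l) : (op s.pt, s.pt) ⟶ (op s.pt, t.pt)) s.el =
    H.map ((l.op, 𝟙 t.pt) : (op t.pt, t.pt) ⟶ (op s.pt, t.pt)) t.el}
  id s := ⟨𝟙 s.pt, by simp⟩
  comp {s t r} f g := ⟨f.1 ≫ g.1, by
    rw [mapSnd_comp, f.2, map_exch, g.2,
      show ((f.1 ≫ g.1).op : op r.pt ⟶ op s.pt) = g.1.op ≫ f.1.op from by simp,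
      mapFst_comp]⟩
  id_comp := by intros; apply Subtype.ext; simp
  comp_id := by intros; apply Subtype.ext; simp
  assoc := by intros; apply Subtype.ext; simp

/-- The projection of the diagonal extension to `X`. -/
@[simps]
def DiagEl.π {X : Type u} [Category.{u} X] (H : Xᵒᵖ × X ⥤ Type u) : DiagEl H ⥤ X where
  obj s := s.pt
  map f := f.1
  map_id := by intros; rfl
  map_comp := by intros; rfl

lemma prodEqToHom {C D : Type*} [Category C] [Category D] {p q : C × D} (h : p = q) :
    eqToHom h = (eqToHom (congrArg Prod.fst h), eqToHom (congrArg Prod.snd h)) := by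
  subst h; rfl

section Aux
variable {X : Type u} [Category.{u} X] (H : Xᵒᵖ × X ⥤ Type u)

/-- The element of `H(x,x)` carried by a section at `x`. -/
def secEl (s : X ⥤ DiagEl H) (hs : s ⋙ DiagEl.π H = 𝟭 X) (x : X) : H.obj (op x, x) :=
  H.map (eqToHom (by rw [show (s.obj x).pt = x from Functor.congr_obj hs x]) :
    (op (s.obj x).pt, (s.obj x).pt) ⟶ (op x, x)) (s.obj x).el

lemma secEl_nat (s : X ⥤ DiagEl H) (hs : s ⋙ DiagEl.π H = 𝟭 X) {x y : X} (f : x ⟶ y) :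
    H.map ((𝟙 (op x), f) : (op x, x) ⟶ (op x, y)) (secEl H s hs x) =
    H.map ((f.op, 𝟙 y) : (op y, y) ⟶ (op x, y)) (secEl H s hs y) := by
  have hx : (s.obj x).pt = x := Functor.congr_obj hs x
  have hy : (s.obj y).pt = y := Functor.congr_obj hs y
  have hf : (s.map f).1 = eqToHom hx ≫ f ≫ eqToHom hy.symm := by
    have := Functor.congr_hom hs f
    simp at this
    exact this
  have hcond := (s.map f).2
  unfold secEl
  rw [← FunctorToTypes.map_comp_apply, ← FunctorToTypes.map_comp_apply]
  have e1 : (eqToHom (by rw [hx]) : ((op (s.obj x).pt, (s.obj x).pt) : Xᵒᵖ × X) ⟶ (op x, x))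
      ≫ ((𝟙 (op x), f) : (op x, x) ⟶ (op x, y)) =
      ((𝟙 (op (s.obj x).pt), (s.map f).1) :
        ((op (s.obj x).pt, (s.obj x).pt) : Xᵒᵖ × X) ⟶ (op (s.obj x).pt, (s.obj y).pt)) ≫
      (eqToHom (by rw [hx, hy]) : ((op (s.obj x).pt, (s.obj y).pt) : Xᵒᵖ × X) ⟶ (op x, y)) := by
    apply Prod.ext
    · simp [prodEqToHom]
    · simp [hf, prodEqToHom]
  have e2 : (eqToHom (by rw [hy]) : ((op (s.obj y).pt, (s.obj y).pt) : Xᵒᵖ × X) ⟶ (op y, y))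
      ≫ ((f.op, 𝟙 y) : (op y, y) ⟶ (op x, y)) =
      (((s.map f).1.op, 𝟙 (s.obj y).pt) :
        ((op (s.obj y).pt, (s.obj y).pt) : Xᵒᵖ × X) ⟶ (op (s.obj x).pt, (s.obj y).pt)) ≫
      (eqToHom (by rw [hx, hy]) : ((op (s.obj x).pt, (s.obj y).pt) : Xᵒᵖ × X) ⟶ (op x, y)) := by
    apply Prod.ext
    · simp [hf, prodEqToHom]
    · simp [prodEqToHom]
  rw [e1, e2, FunctorToTypes.map_comp_apply, FunctorToTypes.map_comp_apply, hcond]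

lemma secEl_nat' (s : X ⥤ DiagEl H) (hs : s ⋙ DiagEl.π H = 𝟭 X) {x : Xᵒᵖ} {y : X}
    (f : x.unop ⟶ y) :
    H.map ((𝟙 x, f) : ((x, x.unop) : Xᵒᵖ × X) ⟶ (x, y)) (secEl H s hs x.unop) =
    H.map ((f.op, 𝟙 y) : ((op y, y) : Xᵒᵖ × X) ⟶ (x, y)) (secEl H s hs y) :=
  secEl_nat H s hs f

/-- The section of the diagonal extension associated to a natural transformation. -/
def secOfNat (α : Functor.hom X ⟶ H) : X ⥤ DiagEl H where
  obj x := ⟨x, α.app (op x, x) (𝟙 x)⟩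
  map {x y} f := ⟨f, by
    have h1 := NatTrans.naturality_apply α ((𝟙 (op x), f) : ((op x, x) : Xᵒᵖ × X) ⟶ (op x, y)) (𝟙 x)
    have h2 := NatTrans.naturality_apply α ((f.op, 𝟙 y) : ((op y, y) : Xᵒᵖ × X) ⟶ (op x, y)) (𝟙 y)
    simp only [Functor.hom_obj, Functor.hom_map, types_comp_apply, CategoryTheory.comp_apply, TypeCat.ofHom_apply, unop_op, Quiver.Hom.unop_op,
      Category.comp_id, Category.id_comp] at h1 h2
    rw [← h2, ← h1]
    show α.app (op x, y) ((𝟙 (op x)).unop ≫ 𝟙 x ≫ f) = α.app (op x, y) (f ≫ 𝟙 y)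
    simp⟩
  map_id x := Subtype.ext rfl
  map_comp f g := Subtype.ext rfl

/-- The natural transformation associated to a section of the diagonal extension. -/
def natOfSec (s : X ⥤ DiagEl H) (hs : s ⋙ DiagEl.π H = 𝟭 X) : Functor.hom X ⟶ H where
  app p := TypeCat.ofHom (fun f => H.map ((𝟙 p.1, f) : ((p.1, p.1.unop) : Xᵒᵖ × X) ⟶ p) (secEl H s hs p.1.unop))
  naturality p q m := by
    ext f
    show H.map ((𝟙 q.1, m.1.unop ≫ f ≫ m.2) : ((q.1, q.1.unop) : Xᵒᵖ × X) ⟶ q)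
        (secEl H s hs q.1.unop) =
      H.map m (H.map ((𝟙 p.1, f) : ((p.1, p.1.unop) : Xᵒᵖ × X) ⟶ p) (secEl H s hs p.1.unop))
    rw [mapSnd_comp, secEl_nat' H s hs (m.1.unop : q.1.unop ⟶ p.1.unop)]
    rw [← FunctorToTypes.map_comp_apply, ← FunctorToTypes.map_comp_apply]
    have : ((m.1.unop.op, 𝟙 p.1.unop) : ((p.1, p.1.unop) : Xᵒᵖ × X) ⟶ (q.1, p.1.unop)) ≫
        ((𝟙 q.1, f ≫ m.2) : ((q.1, p.1.unop) : Xᵒᵖ × X) ⟶ q) =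
        ((𝟙 p.1, f) : ((p.1, p.1.unop) : Xᵒᵖ × X) ⟶ p) ≫ m := by
      apply Prod.ext <;> simp
    rw [this]

lemma diagEl_eq {a : DiagEl H} {x : X} (h : a.pt = x) :
    a = ⟨x, H.map (eqToHom (by rw [h]) : ((op a.pt, a.pt) : Xᵒᵖ × X) ⟶ (op x, x)) a.el⟩ := by
  subst h
  simp [← prod_id]

lemma DiagEl.comp_val {a b c : DiagEl H} (f : a ⟶ b) (g : b ⟶ c) :
    (f ≫ g).1 = f.1 ≫ g.1 := rfl

lemma eqToHom_val {a b : DiagEl H} (p : a = b) :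
    (eqToHom p).1 = eqToHom (congrArg DiagEl.pt p) := by
  subst p; rfl

end Aux

/-- diagonal Yoneda: for any small category `X` and
`H : Xᵒᵖ × X ⥤ Type`, the set of sections of the diagonal extension `i_X H`
is in bijection with the set of natural transformations `hom_X ⟶ H`;
both compute the end of `H`. -/
theorem sections_diagEl_equiv_nat_from_hom (X : Type u) [Category.{u} X]
    (H : Xᵒᵖ × X ⥤ Type u) :
    Nonempty ({s : X ⥤ DiagEl H // s ⋙ DiagEl.π H = 𝟭 X} ≃
      (Functor.hom X ⟶ H)) := by
  refine ⟨{ toFun := fun s => natOfSec H s.1 s.2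
            invFun := fun α => ⟨secOfNat H α, rfl⟩
            left_inv := ?_
            right_inv := ?_ }⟩
  · rintro ⟨s, hs⟩
    apply Subtype.ext
    dsimp only
    refine CategoryTheory.Functor.ext (fun x => ?_) (fun x y f => ?_)
    case _ =>
      show (⟨x, H.map (𝟙 ((op x, x) : Xᵒᵖ × X)) (secEl H s hs x)⟩ : DiagEl H) = s.obj x
      rw [FunctorToTypes.map_id_apply]
      exact (diagEl_eq H (Functor.congr_obj hs x)).symm
    case _ =>
      apply Subtype.ext
      have hf : (s.map f).1 =
          eqToHom (Functor.congr_obj hs x) ≫ f ≫ eqToHom (Functor.congr_obj hs y).symm := by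
        have := Functor.congr_hom hs f
        simp at this
        exact this
      show f = _
      rw [DiagEl.comp_val, DiagEl.comp_val, eqToHom_val, eqToHom_val, hf]
      erw [Category.assoc, Category.assoc, eqToHom_trans_assoc, eqToHom_trans]
      erw [eqToHom_refl, eqToHom_refl, Category.id_comp, Category.comp_id]
  · intro α
    apply NatTrans.ext
    funext p
    ext f
    show H.map ((𝟙 p.1, f) : ((p.1, p.1.unop) : Xᵒᵖ × X) ⟶ p)
        (secEl H (secOfNat H α) rfl p.1.unop) = α.app p f
    have hsec : secEl H (secOfNat H α) rfl p.1.unop = α.app (p.1, p.1.unop) (𝟙 p.1.unop) := by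
      simp only [secEl, eqToHom_refl, FunctorToTypes.map_id_apply]
      erw [eqToHom_refl, Functor.map_id_apply]
      rfl
    rw [hsec]
    have := NatTrans.naturality_apply α ((𝟙 p.1, f) : ((p.1, p.1.unop) : Xᵒᵖ × X) ⟶ p) (𝟙 p.1.unop)
    refine this.symm.trans ?_
    show α.app p ((𝟙 p.1).unop ≫ 𝟙 p.1.unop ≫ f) = α.app p f
    simp
    erw [Category.id_comp]
end
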